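/- arXiv:0803.2311 — 2 statements merged into one kernel-verified Lean document; each statement's English description precedes it below -/
import Mathlib

section
/- Let μ = (μ'₁,…,μ'ₖ,1,…,1) with l trailing parts equal to 1 and each μ'ᵢ ≥ 1. For any filling T of μ, splitting T into the filling T' of shape (μ'₁,…,μ'ₖ) (bottom k rows) and the filling T'' of shape (1^l) (top l rows, a single column), we have inv(T) = inv(T') + inv(T'') and maj(T) ≡ maj(T') + maj(T'') (mod l). -/
/-!  Fillings of Young diagrams (French convention, rows indexed from the
bottom starting at `0`) and the Haglund–Haiman–Loehr statistics.  A shape is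
a list of row lengths (a partition read bottom-up, so weakly decreasing),
and a filling is a function assigning an integer to each cell `(i, j)`
(row `i`, column `j`, both `0`-based). -/

/-- A filling: an integer entry for every potential cell. -/
abbrev Fill := ℕ × ℕ → ℤ

/-- Length of the `i`-th row of the shape `μ`. -/
def rowLen (μ : List ℕ) (i : ℕ) : ℕ := μ.getD i 0

/-- The cells of the shape `μ`. -/
def cells (μ : List ℕ) : Finset (ℕ × ℕ) :=
  (Finset.range μ.length).biUnion fun i =>
    (Finset.range (rowLen μ i)).image fun j => (i, j)

/-- The leg of a cell: the number of cells of `μ` strictly above it. -/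
def leg (μ : List ℕ) (c : ℕ × ℕ) : ℕ :=
  ((Finset.range μ.length).filter fun i' => c.1 < i' ∧ c.2 < rowLen μ i').card

/-- The arm of a cell: the number of cells strictly to its right. -/
def arm (μ : List ℕ) (c : ℕ × ℕ) : ℕ := rowLen μ c.1 - c.2 - 1

/-- `DesRow μ T i`: columns `j` such that the cell `(i, j)` is a descent,
i.e. `T (i, j) > T (i-1, j)` (nonempty only for `i ≥ 1`). -/
def DesRow (μ : List ℕ) (T : Fill) (i : ℕ) : Finset ℕ :=
  (Finset.range (rowLen μ i)).filter fun j => T (i - 1, j) < T (i, j)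

/-- The contribution `Σ (leg + 1)` of the descents in row `i` to `maj`. -/
def majRow (μ : List ℕ) (T : Fill) (i : ℕ) : ℕ :=
  ∑ j ∈ DesRow μ T i, (leg μ (i, j) + 1)

/-- The sum of the arms of the descents in row `i`. -/
def armRow (μ : List ℕ) (T : Fill) (i : ℕ) : ℕ :=
  ∑ j ∈ DesRow μ T i, arm μ (i, j)

/-- Same-row inversions in row `i`: pairs of columns `j < k` with
`T (i, j) > T (i, k)`. -/
def InvRow (μ : List ℕ) (T : Fill) (i : ℕ) : Finset (ℕ × ℕ) :=
  (Finset.range (rowLen μ i) ×ˢ Finset.range (rowLen μ i)).filter fun p =>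
    p.1 < p.2 ∧ T (i, p.2) < T (i, p.1)

/-- Between-row inversions coming from row `i` (over row `i - 1`): pairs of
columns `j < k` with `T (i, j) > T (i - 1, k)`. -/
def InvBetween (μ : List ℕ) (T : Fill) (i : ℕ) : Finset (ℕ × ℕ) :=
  (Finset.range (rowLen μ i) ×ˢ Finset.range (rowLen μ i)).filter fun p =>
    p.1 < p.2 ∧ T (i - 1, p.2) < T (i, p.1)

/-- The local inversion statistic
`inv_{i,i-1} = |Inv_i| + |Inv_{i,i-1}| − arm_{i,i-1}`. -/
def invRow (μ : List ℕ) (T : Fill) (i : ℕ) : ℤ :=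
  ((InvRow μ T i).card : ℤ) + (InvBetween μ T i).card - armRow μ T i

/-- The major-index statistic `maj(T) = Σ_{u ∈ Des(T)} (leg(u) + 1)`. -/
def maj (μ : List ℕ) (T : Fill) : ℕ :=
  ∑ i ∈ Finset.Ico 1 μ.length, majRow μ T i

/-- The inversion statistic
`inv(T) = |Inv_1(T)| + Σ_{i ≥ 2} inv_{i,i-1}(T)`. -/
def inv (μ : List ℕ) (T : Fill) : ℤ :=
  ((InvRow μ T 0).card : ℤ) + ∑ i ∈ Finset.Ico 1 μ.length, invRow μ T i

/-- The top piece of a filling cut above row `k`, reindexed from row `0`. -/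
def topPart (k : ℕ) (T : Fill) : Fill := fun c => T (c.1 + k, c.2)

/-! Rows of length at most one carry no inversions and no arms, and the statistics of a row
depend on the shape only through that row's length; so the single-cell rows on top add
nothing to `inv`. For `maj`, a descent in the tail has the same leg in `T` as in `T''`, a
descent in column `0` of `μ'` gains exactly the `l` tail cells above it, and a descent at the
junction has leg `l - 1`; all differences are multiples of `l`. -/

theorem rowLen_append_of_lt {μ ν : List ℕ} {i : ℕ} (h : i < μ.length) :
    rowLen (μ ++ ν) i = rowLen μ i :=
  List.getD_append μ ν 0 i h

theorem rowLen_append_add (μ ν : List ℕ) (t : ℕ) :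
    rowLen (μ ++ ν) (μ.length + t) = rowLen ν t := by
  simp [rowLen, List.getD_eq_getElem?_getD, List.getElem?_append_right]

theorem rowLen_replicate (l a i : ℕ) :
    rowLen (List.replicate l a) i = if i < l then a else 0 := by
  rw [rowLen, List.getD_eq_getElem?_getD, List.getElem?_replicate]
  split <;> simp

theorem rowLen_replicate_one_le (l i : ℕ) : rowLen (List.replicate l 1) i ≤ 1 := by
  rw [rowLen_replicate]
  split <;> omega

section Inv

variable {μ ν : List ℕ} {T : Fill} {i : ℕ}

theorem InvRow_congr (h : rowLen μ i = rowLen ν i) : InvRow μ T i = InvRow ν T i := by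
  simp only [InvRow, h]

theorem invRow_congr (h : rowLen μ i = rowLen ν i) : invRow μ T i = invRow ν T i := by
  simp only [invRow, InvRow, InvBetween, armRow, DesRow, arm, h]

theorem InvRow_eq_empty (h : rowLen μ i ≤ 1) : InvRow μ T i = ∅ :=
  Finset.filter_false_of_mem fun p hp hlt => by
    simp only [Finset.mem_product, Finset.mem_range] at hp
    omega

theorem invRow_eq_zero (h : rowLen μ i ≤ 1) : invRow μ T i = 0 := by
  have hBetween : InvBetween μ T i = ∅ :=
    Finset.filter_false_of_mem fun p hp hlt => by
      simp only [Finset.mem_product, Finset.mem_range] at hp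
      omega
  have hArm : armRow μ T i = 0 := Finset.sum_eq_zero fun j _ => by simp only [arm]; omega
  simp [invRow, InvRow_eq_empty h, hBetween, hArm]

theorem inv_eq_zero_of_rowLen_le_one (h : ∀ i, rowLen μ i ≤ 1) : inv μ T = 0 := by
  simp [inv, InvRow_eq_empty (h 0), Finset.sum_eq_zero fun i _ => invRow_eq_zero (T := T) (h i)]

theorem inv_append (h : ∀ t, rowLen ν t ≤ 1) : inv (μ ++ ν) T = inv μ T := by
  have hTop : ∀ i ∈ Finset.Ico 1 (μ ++ ν).length, i ∉ Finset.Ico 1 μ.length →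
      invRow (μ ++ ν) T i = 0 := by
    intro i hi hi'
    have hle : μ.length ≤ i := by simp_all
    obtain ⟨t, rfl⟩ := Nat.exists_eq_add_of_le hle
    exact invRow_eq_zero (by rw [rowLen_append_add]; exact h t)
  unfold inv
  rw [← Finset.sum_subset (Finset.Ico_subset_Ico_right (by simp)) hTop]
  congr 1
  · rcases μ with _ | ⟨m, μ⟩
    · have hNil : rowLen [] 0 ≤ 1 := Nat.zero_le 1
      simp [InvRow_eq_empty (h 0), InvRow_eq_empty (T := T) hNil]
    · rw [InvRow_congr (rowLen_append_of_lt (by simp))]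
  · exact Finset.sum_congr rfl fun i hi =>
      invRow_congr (rowLen_append_of_lt (Finset.mem_Ico.mp hi).2)

end Inv

section Maj

variable {μ ν : List ℕ} {T : Fill}

theorem leg_append_of_lt {i : ℕ} (j : ℕ) (h : i < μ.length) :
    leg (μ ++ ν) (i, j) =
      leg μ (i, j) + ((Finset.range ν.length).filter fun t => j < rowLen ν t).card := by
  simp only [leg, Finset.card_filter, List.length_append, Finset.sum_range_add,
    rowLen_append_add]
  congr 1
  · refine Finset.sum_congr rfl fun i' hi' => ?_
    rw [rowLen_append_of_lt (Finset.mem_range.mp hi')]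
  · refine Finset.sum_congr rfl fun t _ => ?_
    simp only [show i < μ.length + t by omega, true_and]

theorem leg_append_add (s j : ℕ) :
    leg (μ ++ ν) (μ.length + s, j) = leg ν (s, j) := by
  simp only [leg, Finset.card_filter, List.length_append, Finset.sum_range_add,
    rowLen_append_add, Nat.add_lt_add_iff_left]
  rw [Finset.sum_eq_zero fun i' hi' => if_neg fun h => by
    simp only [Finset.mem_range] at hi'; omega, zero_add]

theorem leg_replicate_one (l s : ℕ) : leg (List.replicate l 1) (s, 0) = l - (s + 1) := by
  have : ((Finset.range l).filter fun i' => s < i' ∧ 0 < rowLen (List.replicate l 1) i') =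
      Finset.Ico (s + 1) l := by
    ext i'
    simp only [Finset.mem_filter, Finset.mem_range, Finset.mem_Ico, rowLen_replicate]
    split <;> omega
  simp [leg, this]

theorem majRow_append_add {t : ℕ} (ht : 1 ≤ t) :
    majRow (μ ++ ν) T (μ.length + t) = majRow ν (topPart μ.length T) t := by
  have hDes : DesRow (μ ++ ν) T (μ.length + t) = DesRow ν (topPart μ.length T) t := by
    unfold DesRow topPart
    rw [rowLen_append_add]
    refine Finset.filter_congr fun j _ => ?_
    rw [show μ.length + t - 1 = t - 1 + μ.length by omega, add_comm μ.length t]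
  simp only [majRow, hDes, leg_append_add]

theorem maj_append (hμ : 0 < μ.length) (hν : 0 < ν.length) :
    maj (μ ++ ν) T = ∑ i ∈ Finset.Ico 1 μ.length, majRow (μ ++ ν) T i
      + majRow (μ ++ ν) T μ.length + maj ν (topPart μ.length T) := by
  rw [maj, List.length_append, ← Finset.sum_Ico_consecutive _ hμ (Nat.le_add_right _ _),
    Finset.sum_Ico_eq_sum_range _ μ.length, Nat.add_sub_cancel_left,
    Finset.sum_range_eq_add_Ico _ hν, add_zero, add_assoc, maj]
  congr 2
  exact Finset.sum_congr rfl fun t ht => majRow_append_add (Finset.mem_Ico.mp ht).1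

end Maj

section ColumnTail

variable {μ : List ℕ} {l : ℕ} {T : Fill}

theorem majRow_append_replicate_one_modEq {i : ℕ} (hi : i < μ.length) :
    majRow (μ ++ List.replicate l 1) T i ≡ majRow μ T i [MOD l] := by
  have hDes : DesRow (μ ++ List.replicate l 1) T i = DesRow μ T i := by
    simp only [DesRow, rowLen_append_of_lt hi]
  have hColumn (j : ℕ) : ((Finset.range (List.replicate l 1).length).filter
      fun t => j < rowLen (List.replicate l 1) t).card = if j = 0 then l else 0 := by
    split
    · subst j
      rw [Finset.filter_true_of_mem fun t ht => by simp_all [rowLen_replicate]]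
      simp
    · rw [Finset.filter_false_of_mem fun t _ => by rw [rowLen_replicate]; split <;> omega]
      simp
  unfold majRow
  rw [hDes]
  refine Nat.ModEq.sum fun j _ => ?_
  rw [leg_append_of_lt j hi, hColumn j]
  split
  · rw [add_right_comm]
    exact Nat.add_modEq_right
  · rfl

theorem majRow_append_replicate_one_length_modEq :
    majRow (μ ++ List.replicate l 1) T μ.length ≡ 0 [MOD l] := by
  refine Nat.ModEq.sum_zero fun j hj => ?_
  have hj : j < rowLen (List.replicate l 1) 0 := by
    simpa [DesRow, ← rowLen_append_add μ (List.replicate l 1) 0] using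
      (Finset.mem_filter.mp hj).1
  rw [rowLen_replicate] at hj
  obtain ⟨hl, rfl⟩ : 0 < l ∧ j = 0 := by split at hj <;> omega
  rw [← add_zero μ.length, leg_append_add, leg_replicate_one, Nat.sub_add_cancel hl]
  exact Nat.modEq_zero_iff_dvd.mpr dvd_rfl

theorem maj_append_replicate_one_modEq (hl : 0 < l) :
    maj (μ ++ List.replicate l 1) T ≡
      maj μ T + maj (List.replicate l 1) (topPart μ.length T) [MOD l] := by
  rcases Nat.eq_zero_or_pos μ.length with hμ | hμ
  · obtain rfl := List.length_eq_zero_iff.mp hμ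
    have hNil : maj [] T = 0 := by simp [maj]
    rw [List.nil_append, show topPart [].length T = T from rfl, hNil, zero_add]
  · rw [maj_append hμ (by simpa using hl), maj]
    refine .add_right _ ((Nat.ModEq.sum fun i hi => ?_).add
      majRow_append_replicate_one_length_modEq)
    exact majRow_append_replicate_one_modEq (Finset.mem_Ico.mp hi).2

end ColumnTail

theorem inv_maj_split_column_tail_general (μ' : List ℕ) (l : ℕ) (hl : 0 < l) (T : Fill) :
    inv (μ' ++ List.replicate l 1) T
        = inv μ' T + inv (List.replicate l 1) (topPart μ'.length T) ∧
    (maj (μ' ++ List.replicate l 1) T : ℤ)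
        ≡ (maj μ' T : ℤ) + (maj (List.replicate l 1) (topPart μ'.length T) : ℤ)
          [ZMOD (l : ℤ)] := by
  refine ⟨?_, ?_⟩
  · rw [inv_append (rowLen_replicate_one_le l),
      inv_eq_zero_of_rowLen_le_one (rowLen_replicate_one_le l), add_zero]
  · exact_mod_cast Int.natCast_modEq_iff.mpr (maj_append_replicate_one_modEq hl)

/-- for `μ = (μ'₁,…,μ'ₖ,1^l)` with every `μ'ᵢ ≥ 1` (so `μ` is a
partition with a tail of `l` rows of length `1` on top), splitting a filling
`T` of `μ` into the filling `T' = T` of shape `μ'` (bottom `k` rows) and the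
filling `T''` of shape `(1^l)` (top `l` rows), one has
`inv(T) = inv(T') + inv(T'')` and `maj(T) ≡ maj(T') + maj(T'') (mod l)`. -/
theorem inv_maj_split_column_tail (μ' : List ℕ) (l : ℕ) (hl : 0 < l)
    (hsort : List.Pairwise (· ≥ ·) μ') (hpos : ∀ m ∈ μ', 1 ≤ m) (T : Fill) :
    inv (μ' ++ List.replicate l 1) T
        = inv μ' T + inv (List.replicate l 1) (topPart μ'.length T) ∧
    (maj (μ' ++ List.replicate l 1) T : ℤ)
        ≡ (maj μ' T : ℤ) + (maj (List.replicate l 1) (topPart μ'.length T) : ℤ)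
          [ZMOD (l : ℤ)] :=
  inv_maj_split_column_tail_general μ' l hl T
end

section
/- Let μ = (μ'₁,…,μ'ₖ, 2^l) with μ'ₖ ≥ 2. The map τ defined by Algorithm: starting at row i = k, if rows i and i+1 satisfy condition xAx (when row i+1 has 2 cells and sits above a row with ≥ 2 cells: with top row (a,b) and the cell A below a, a ≤ A < b or b ≤ A < a), swap the two entries of row i+1 and increment i; then while rows i and i+1 satisfy condition xXxX, swap the two entries of row i+1 and increment i; output the resulting filling. Then τ is an involution on the set of fillings of μ of any fixed evaluation; in particular τ is a bijection. -/
/-- The `xAx` condition on a triple `(a,b,A)`. -/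
def xAxP (a b A : ℤ) : Prop := (a ≤ A ∧ A < b) ∨ (b ≤ A ∧ A < a)

instance (a b A : ℤ) : Decidable (xAxP a b A) := by
  unfold xAxP; infer_instance

/-- The `xXxX` condition on a quadruple `(a,b,A,B)`. -/
def xXxXP (a b A B : ℤ) : Prop :=
  (a ≤ A ∧ A < b ∧ b ≤ B) ∨ (A < b ∧ b ≤ B ∧ B < a) ∨
  (b ≤ A ∧ A < a ∧ a ≤ B) ∨ (A < a ∧ a ≤ B ∧ B < b) ∨
  (a ≤ B ∧ B < b ∧ b ≤ A) ∨ (B < b ∧ b ≤ A ∧ A < a) ∨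
  (b ≤ B ∧ B < a ∧ a ≤ A) ∨ (B < a ∧ a ≤ A ∧ A < b)

instance (a b A B : ℤ) : Decidable (xXxXP a b A B) := by
  unfold xXxXP; infer_instance

/-- Swap the two entries `(i,0)` and `(i,1)` of row `i`. -/
def swapRow (i : ℕ) (T : Fill) : Fill := fun c =>
  if c = (i, 0) then T (i, 1) else if c = (i, 1) then T (i, 0) else T c

/-- The while-loop of the algorithm: as long as rows `j` (bottom) and `j+1`
(top) satisfy the `xXxX` condition, swap the two entries of row `j+1` and
move up; `f` is a fuel bound on the number of iterations. -/
def tauLoop : ℕ → ℕ → Fill → Fill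
  | 0, _, T => T
  | f + 1, j, T =>
      if xXxXP (T (j + 1, 0)) (T (j + 1, 1)) (T (j, 0)) (T (j, 1)) then
        tauLoop f (j + 1) (swapRow (j + 1) T)
      else T

/-- The map `τ` of the algorithm for `μ = (μ'₁, …, μ'ₖ, 2^l)` (`k` bottom
rows forming `μ'`, then `l` rows of length `2`): if the junction rows `k-1`
(top row of `μ'`) and `k` (first row of the tail) satisfy `xAx`, swap row
`k` and run the `xXxX` while-loop upwards; otherwise do nothing. -/
def tau (k l : ℕ) (T : Fill) : Fill :=
  if xAxP (T (k, 0)) (T (k, 1)) (T (k - 1, 0)) then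
    tauLoop (l - 1) k (swapRow k T)
  else T

/-! The algorithm only ever swaps the two entries of a row, and whether it does so at a row is
decided by `xAx` / `xXxX` conditions that are invariant under swapping the entries of either
row involved. Running `τ` a second time therefore meets the same conditions at the same rows,
undoes every swap, and stops where the first run stopped. Rows from row `k` on have two cells
or none, so each swap permutes the cells of `μ` and the evaluation is preserved. -/

lemma xAxP_comm {a b A : ℤ} : xAxP b a A ↔ xAxP a b A := by
  unfold xAxP; omega

lemma xXxXP_comm_top {a b A B : ℤ} : xXxXP b a A B ↔ xXxXP a b A B := by
  unfold xXxXP; omega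

lemma xXxXP_comm_bot {a b A B : ℤ} : xXxXP a b B A ↔ xXxXP a b A B := by
  unfold xXxXP; omega

lemma swapRow_eq_comp_swap (i : ℕ) (T : Fill) :
    swapRow i T = T ∘ Equiv.swap (i, 0) (i, 1) := by
  funext c
  simp only [swapRow, Function.comp_apply, Equiv.swap_apply_def]
  split_ifs <;> rfl

@[simp]
lemma swapRow_apply_zero (i : ℕ) (T : Fill) : swapRow i T (i, 0) = T (i, 1) := by
  simp [swapRow]

@[simp]
lemma swapRow_apply_one (i : ℕ) (T : Fill) : swapRow i T (i, 1) = T (i, 0) := by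
  simp [swapRow]

lemma swapRow_apply_of_ne {i i' : ℕ} (h : i' ≠ i) (T : Fill) (m : ℕ) :
    swapRow i T (i', m) = T (i', m) := by
  simp [swapRow, h]

@[simp]
lemma swapRow_swapRow (i : ℕ) (T : Fill) : swapRow i (swapRow i T) = T := by
  funext c
  simp [swapRow_eq_comp_swap]

lemma swapRow_comm {i i' : ℕ} (h : i ≠ i') (T : Fill) :
    swapRow i (swapRow i' T) = swapRow i' (swapRow i T) := by
  funext c
  simp only [swapRow, Prod.ext_iff]
  split_ifs <;> first | rfl | omega

lemma tauLoop_apply_of_le (f : ℕ) {i j : ℕ} (h : i ≤ j) (T : Fill) (m : ℕ) :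
    tauLoop f j T (i, m) = T (i, m) := by
  induction f generalizing j T with
  | zero => rfl
  | succ f ih =>
    rw [tauLoop]
    split_ifs
    · rw [ih (by omega), swapRow_apply_of_ne (by omega)]
    · rfl

lemma tauLoop_swapRow_of_lt (f : ℕ) {i j : ℕ} (h : i < j) (T : Fill) :
    tauLoop f j (swapRow i T) = swapRow i (tauLoop f j T) := by
  induction f generalizing j T with
  | zero => rfl
  | succ f ih =>
    simp only [tauLoop, swapRow_apply_of_ne (show j + 1 ≠ i by omega),
      swapRow_apply_of_ne h.ne']
    split_ifs
    · rw [swapRow_comm (by omega), ih (by omega)]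
    · rfl

lemma tauLoop_swapRow_tauLoop_swapRow (f j : ℕ) (T : Fill) :
    tauLoop f j (swapRow j (tauLoop f j (swapRow j T))) = T := by
  induction f generalizing j T with
  | zero => exact swapRow_swapRow j T
  | succ f ih =>
    have hj : j + 1 ≠ j := by omega
    by_cases hc : xXxXP (T (j + 1, 0)) (T (j + 1, 1)) (T (j, 0)) (T (j, 1))
    · have hc₁ : xXxXP (swapRow j T (j + 1, 0)) (swapRow j T (j + 1, 1))
          (swapRow j T (j, 0)) (swapRow j T (j, 1)) := by
        simpa [swapRow_apply_of_ne hj, xXxXP_comm_bot] using hc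
      set R := tauLoop f (j + 1) (swapRow (j + 1) (swapRow j T))
      have hR : tauLoop (f + 1) j (swapRow j T) = R := by rw [tauLoop, if_pos hc₁]
      have hc₂ : xXxXP (swapRow j R (j + 1, 0)) (swapRow j R (j + 1, 1))
          (swapRow j R (j, 0)) (swapRow j R (j, 1)) := by
        simpa [R, swapRow_apply_of_ne hj, tauLoop_apply_of_le, swapRow_apply_of_ne hj.symm,
          xXxXP_comm_top] using hc
      rw [hR, tauLoop, if_pos hc₂, swapRow_comm hj, tauLoop_swapRow_of_lt f (by omega), ih,
        swapRow_swapRow]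
    · have hc₁ : ¬xXxXP (swapRow j T (j + 1, 0)) (swapRow j T (j + 1, 1))
          (swapRow j T (j, 0)) (swapRow j T (j, 1)) := by
        simpa [swapRow_apply_of_ne hj, xXxXP_comm_bot] using hc
      have hT : tauLoop (f + 1) j (swapRow j T) = swapRow j T := by rw [tauLoop, if_neg hc₁]
      rw [hT, swapRow_swapRow, tauLoop, if_neg hc]

-- For `k = 0` the truncated `k - 1` is `k`, and the `xAx` test reads the swapped row twice.
lemma tau_tau {k : ℕ} (hk : 0 < k) (l : ℕ) (T : Fill) : tau k l (tau k l T) = T := by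
  by_cases hc : xAxP (T (k, 0)) (T (k, 1)) (T (k - 1, 0))
  · set R := tauLoop (l - 1) k (swapRow k T)
    have hR : xAxP (R (k, 0)) (R (k, 1)) (R (k - 1, 0)) := by
      simpa [R, tauLoop_apply_of_le, swapRow_apply_of_ne (show k - 1 ≠ k by omega), xAxP_comm]
        using hc
    have hT : tau k l T = R := if_pos hc
    rw [hT, tau, if_pos hR, tauLoop_swapRow_tauLoop_swapRow]
  · have hT : tau k l T = T := if_neg hc
    rw [hT, hT]

section evaluation

open Finset

lemma card_filter_comp_swap {α β : Type*} [DecidableEq α] [DecidableEq β] {s : Finset α}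
    {a b : α} (hs : a ∈ s ↔ b ∈ s) (T : α → β) (v : β) :
    #{c ∈ s | T (Equiv.swap a b c) = v} = #{c ∈ s | T c = v} := by
  refine card_equiv (Equiv.swap a b) fun c => ?_
  have hc : Equiv.swap a b c ∈ s ↔ c ∈ s := by
    rw [Equiv.swap_apply_def]
    split_ifs with ha hb
    · subst ha; exact hs.symm
    · subst hb; exact hs
    · rfl
  simp only [mem_filter, hc]

lemma mem_cells_iff {μ : List ℕ} {c : ℕ × ℕ} : c ∈ cells μ ↔ c.2 < rowLen μ c.1 := by
  obtain ⟨i, j⟩ := c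
  simp only [cells, mem_biUnion, mem_range, mem_image, Prod.mk.injEq]
  constructor
  · rintro ⟨i, -, j, hj, rfl, rfl⟩
    exact hj
  · intro hj
    refine ⟨i, ?_, j, hj, rfl, rfl⟩
    by_contra hi
    rw [rowLen, List.getD_eq_default _ _ (not_lt.mp hi)] at hj
    omega

lemma card_filter_swapRow {μ : List ℕ} {i : ℕ} (hi : rowLen μ i ≠ 1) (T : Fill) (v : ℤ) :
    #{c ∈ cells μ | swapRow i T c = v} = #{c ∈ cells μ | T c = v} := by
  rw [swapRow_eq_comp_swap]
  exact card_filter_comp_swap (by simp only [mem_cells_iff]; omega) T v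

lemma card_filter_tauLoop {μ : List ℕ} (f j : ℕ) (hμ : ∀ i, j < i → rowLen μ i ≠ 1) (T : Fill)
    (v : ℤ) : #{c ∈ cells μ | tauLoop f j T c = v} = #{c ∈ cells μ | T c = v} := by
  induction f generalizing j T with
  | zero => rfl
  | succ f ih =>
    rw [tauLoop]
    split_ifs
    · rw [ih (j + 1) (fun i hi => hμ i (by omega)), card_filter_swapRow (hμ (j + 1) (by omega))]
    · rfl

lemma card_filter_tau {μ : List ℕ} (k l : ℕ) (hμ : ∀ i, k ≤ i → rowLen μ i ≠ 1) (T : Fill)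
    (v : ℤ) : #{c ∈ cells μ | tau k l T c = v} = #{c ∈ cells μ | T c = v} := by
  rw [tau]
  split_ifs
  · rw [card_filter_tauLoop _ _ (fun i hi => hμ i hi.le), card_filter_swapRow (hμ k le_rfl)]
  · rfl

lemma rowLen_append_replicate_ne_one (μ' : List ℕ) (l : ℕ) {i : ℕ} (hi : μ'.length ≤ i) :
    rowLen (μ' ++ List.replicate l 2) i ≠ 1 := by
  rw [rowLen, List.getD_append_right _ _ _ _ hi, List.getD_eq_getElem?_getD,
    List.getElem?_replicate]
  split_ifs <;> simp

end evaluation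

theorem tau_involution_general (μ' : List ℕ) (l : ℕ) (hne : μ' ≠ [])
    (T : Fill) :
    tau μ'.length l (tau μ'.length l T) = T ∧
    ∀ v : ℤ,
      (((cells (μ' ++ List.replicate l 2)).filter fun c => T c = v)).card =
      (((cells (μ' ++ List.replicate l 2)).filter
          fun c => tau μ'.length l T c = v)).card := by
  refine ⟨tau_tau (List.length_pos_iff.mpr hne) l T, fun v => ?_⟩
  exact (card_filter_tau _ l (fun i => rowLen_append_replicate_ne_one μ' l) T v).symm

/-- for `μ = (μ'₁,…,μ'ₖ,2^l)` with `μ'ₖ ≥ 2`, the map `τ` of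
the swapping algorithm is an involution on fillings of `μ`; moreover it
preserves the evaluation (the multiset of entries of the cells of `μ`),
hence is a bijection of the set of fillings of `μ` of any fixed
evaluation. -/
theorem tau_involution (μ' : List ℕ) (l : ℕ) (hne : μ' ≠ [])
    (hsort : List.Pairwise (· ≥ ·) μ') (hlast : 2 ≤ μ'.getLast hne) (T : Fill) :
    tau μ'.length l (tau μ'.length l T) = T ∧
    ∀ v : ℤ,
      (((cells (μ' ++ List.replicate l 2)).filter fun c => T c = v)).card =
      (((cells (μ' ++ List.replicate l 2)).filter
          fun c => tau μ'.length l T c = v)).card :=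
  tau_involution_general μ' l hne T
end
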